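/- arXiv:2003.04300 — 5 statements merged into one kernel-verified Lean document; each statement's English description precedes it below -/
import Mathlib

section
/- Let M = (S, A, T, R, γ) and M̄ = (S̄, A, T̄, R̄, γ) be finite MDPs with the same action set and discount factor, and let φ : S → S̄ be an MDP bisimulation from M to M̄, i.e., a surjection satisfying R(s,a) = R̄(φ(s),a) and ∑_{s' : φ(s') = s̄} T(s,a,s') = T̄(φ(s),a,s̄) for all s ∈ S, a ∈ A, s̄ ∈ S̄. Let π̄ be a policy on M̄ and define the lifted policy π on M by π(s,a) := π̄(φ(s),a). If Q̄_π̄ : S̄ × A → ℝ satisfies the Bellman evaluation equation of π̄ in M̄ and Q_π : S × A → ℝ satisfies the Bellman evaluation equation of π in M, then Q_π(s,a) = Q̄_π̄(φ(s),a) for all s ∈ S and a ∈ A. -/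
open Finset in
/-- Under a bisimulation `φ`, the value function of a policy lifted from the
abstract MDP equals the abstract value function composed with `φ`. -/
theorem lifted_policy_value_equals_abstract_value
    {S A Sb : Type*} [Fintype S] [Fintype A] [Fintype Sb]
    [Nonempty S] [Nonempty A] [Nonempty Sb] [DecidableEq Sb]
    (T : S → A → S → ℝ) (R : S → A → ℝ)
    (Tb : Sb → A → Sb → ℝ) (Rb : Sb → A → ℝ) (γ : ℝ)
    (hT0 : ∀ s a s', 0 ≤ T s a s') (hT1 : ∀ s a, ∑ s', T s a s' = 1)
    (hTb0 : ∀ sb a sb', 0 ≤ Tb sb a sb') (hTb1 : ∀ sb a, ∑ sb', Tb sb a sb' = 1)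
    (hγ0 : 0 ≤ γ) (hγ1 : γ < 1)
    (φ : S → Sb) (hφ : Function.Surjective φ)
    (hR : ∀ s a, R s a = Rb (φ s) a)
    (hT : ∀ s a (sb : Sb),
      (∑ s' ∈ univ.filter (fun s' => φ s' = sb), T s a s') = Tb (φ s) a sb)
    (πb : Sb → A → ℝ) (hπb0 : ∀ sb a, 0 ≤ πb sb a) (hπb1 : ∀ sb, ∑ a, πb sb a = 1)
    (π : S → A → ℝ) (hπ : ∀ s a, π s a = πb (φ s) a)
    (Qbπb : Sb → A → ℝ)
    (hQb : ∀ sb a, Qbπb sb a = Rb sb a + γ * ∑ sb', Tb sb a sb' * ∑ a', πb sb' a' * Qbπb sb' a')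
    (Qπ : S → A → ℝ)
    (hQ : ∀ s a, Qπ s a = R s a + γ * ∑ s', T s a s' * ∑ a', π s' a' * Qπ s' a') :
    ∀ s a, Qπ s a = Qbπb (φ s) a := by
  classical
  -- transport sums over Sb to sums over S via the fibers of φ
  have key : ∀ s a (f : Sb → ℝ),
      ∑ sb', Tb (φ s) a sb' * f sb' = ∑ s', T s a s' * f (φ s') := by
    intro s a f
    rw [← Finset.sum_fiberwise univ φ (fun s' => T s a s' * f (φ s'))]
    refine Finset.sum_congr rfl fun sb' _ => ?_
    rw [← hT s a sb', Finset.sum_mul]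
    refine Finset.sum_congr rfl fun s' hs' => ?_
    simp only [Finset.mem_filter] at hs'
    rw [hs'.2]
  set Δ : S → A → ℝ := fun s a => Qπ s a - Qbπb (φ s) a with hΔ
  have hrec : ∀ s a, Δ s a = γ * ∑ s', T s a s' * ∑ a', πb (φ s') a' * Δ s' a' := by
    intro s a
    have h1 : Qπ s a = Rb (φ s) a + γ * ∑ s', T s a s' * ∑ a', πb (φ s') a' * Qπ s' a' := by
      rw [hQ s a, hR s a]
      congr 2
      refine Finset.sum_congr rfl fun s' _ => ?_
      congr 1
      exact Finset.sum_congr rfl fun a' _ => by rw [hπ]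
    have h2 : Qbπb (φ s) a
        = Rb (φ s) a + γ * ∑ s', T s a s' * ∑ a', πb (φ s') a' * Qbπb (φ s') a' := by
      rw [hQb (φ s) a, key s a (fun sb' => ∑ a', πb sb' a' * Qbπb sb' a')]
    simp only [hΔ, h1, h2]
    rw [add_sub_add_left_eq_sub, ← mul_sub, ← Finset.sum_sub_distrib]
    congr 1
    refine Finset.sum_congr rfl fun s' _ => ?_
    rw [← mul_sub, ← Finset.sum_sub_distrib]
    congr 1
    exact Finset.sum_congr rfl fun a' _ => (mul_sub _ _ _).symm
  -- take the maximizer of |Δ|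
  obtain ⟨p, -, hp⟩ := Finset.exists_max_image (Finset.univ : Finset (S × A))
    (fun p => |Δ p.1 p.2|) ⟨Classical.arbitrary _, Finset.mem_univ _⟩
  set D := |Δ p.1 p.2| with hD
  have hD0 : 0 ≤ D := abs_nonneg _
  have hbound : ∀ s a, |Δ s a| ≤ D := fun s a => hp (s, a) (Finset.mem_univ _)
  have hDle : D ≤ γ * D := by
    calc D = |γ * ∑ s', T p.1 p.2 s' * ∑ a', πb (φ s') a' * Δ s' a'| := by
            rw [hD, hrec]
      _ = γ * |∑ s', T p.1 p.2 s' * ∑ a', πb (φ s') a' * Δ s' a'| := by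
            rw [abs_mul, abs_of_nonneg hγ0]
      _ ≤ γ * D := by
            refine mul_le_mul_of_nonneg_left ?_ hγ0
            calc |∑ s', T p.1 p.2 s' * ∑ a', πb (φ s') a' * Δ s' a'|
                ≤ ∑ s', |T p.1 p.2 s' * ∑ a', πb (φ s') a' * Δ s' a'| :=
                  Finset.abs_sum_le_sum_abs _ _
              _ ≤ ∑ s', T p.1 p.2 s' * D := by
                  refine Finset.sum_le_sum fun s' _ => ?_
                  rw [abs_mul, abs_of_nonneg (hT0 _ _ _)]
                  refine mul_le_mul_of_nonneg_left ?_ (hT0 _ _ _)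
                  calc |∑ a', πb (φ s') a' * Δ s' a'|
                      ≤ ∑ a', |πb (φ s') a' * Δ s' a'| :=
                        Finset.abs_sum_le_sum_abs _ _
                    _ ≤ ∑ a', πb (φ s') a' * D := by
                        refine Finset.sum_le_sum fun a' _ => ?_
                        rw [abs_mul, abs_of_nonneg (hπb0 _ _)]
                        exact mul_le_mul_of_nonneg_left (hbound _ _) (hπb0 _ _)
                    _ = D := by rw [← Finset.sum_mul, hπb1, one_mul]
              _ = D := by rw [← Finset.sum_mul, hT1, one_mul]
  have hDzero : D = 0 := by nlinarith
  intro s a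
  have := hbound s a
  rw [hDzero] at this
  have : |Δ s a| = 0 := le_antisymm this (abs_nonneg _)
  have := abs_eq_zero.mp this
  simpa [hΔ, sub_eq_zero] using this
end

section
/- Let M = (S, A, T, R, γ) and M̄ = (S̄, A, T̄, R̄, γ) be finite MDPs with the same action set and discount factor, and let φ : S → S̄ be an MDP bisimulation from M to M̄, i.e., a surjection satisfying R(s,a) = R̄(φ(s),a) and ∑_{s' : φ(s') = s̄} T(s,a,s') = T̄(φ(s),a,s̄) for all s ∈ S, a ∈ A, s̄ ∈ S̄. If Q* : S × A → ℝ satisfies the Bellman optimality equation in M and Q̄* : S̄ × A → ℝ satisfies the Bellman optimality equation in M̄, then Q*(s,a) = Q̄*(φ(s),a) for all s ∈ S and a ∈ A. In particular, Q* is constant on each fiber of φ: φ(s₁) = φ(s₂) implies Q*(s₁,a) = Q*(s₂,a) for all a ∈ A. -/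
open Finset in
/-- Under a bisimulation `φ`, optimal state-action values in the ground MDP
equal the abstract optimal values composed with `φ`; in particular `Q*` is
constant on each fiber of `φ`. -/
theorem optimal_values_factor_through_bisimulation
    {S A Sb : Type*} [Fintype S] [Fintype A] [Fintype Sb]
    [Nonempty S] [Nonempty A] [Nonempty Sb] [DecidableEq Sb]
    (T : S → A → S → ℝ) (R : S → A → ℝ)
    (Tb : Sb → A → Sb → ℝ) (Rb : Sb → A → ℝ) (γ : ℝ)
    (hT0 : ∀ s a s', 0 ≤ T s a s') (hT1 : ∀ s a, ∑ s', T s a s' = 1)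
    (hTb0 : ∀ sb a sb', 0 ≤ Tb sb a sb') (hTb1 : ∀ sb a, ∑ sb', Tb sb a sb' = 1)
    (hγ0 : 0 ≤ γ) (hγ1 : γ < 1)
    (φ : S → Sb) (hφ : Function.Surjective φ)
    (hR : ∀ s a, R s a = Rb (φ s) a)
    (hT : ∀ s a (sb : Sb),
      (∑ s' ∈ univ.filter (fun s' => φ s' = sb), T s a s') = Tb (φ s) a sb)
    (Qstar : S → A → ℝ)
    (hQstar : ∀ s a, Qstar s a = R s a + γ * ∑ s', T s a s' * ⨆ a', Qstar s' a')
    (Qbstar : Sb → A → ℝ)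
    (hQbstar : ∀ sb a, Qbstar sb a = Rb sb a + γ * ∑ sb', Tb sb a sb' * ⨆ a', Qbstar sb' a') :
    (∀ s a, Qstar s a = Qbstar (φ s) a) ∧
    (∀ s₁ s₂ a, φ s₁ = φ s₂ → Qstar s₁ a = Qstar s₂ a) := by
  -- the error function and its sup
  set f : S × A → ℝ := fun p => |Qstar p.1 p.2 - Qbstar (φ p.1) p.2| with hf
  have hbdd : BddAbove (Set.range f) := Set.Finite.bddAbove (Set.finite_range f)
  set D : ℝ := ⨆ p, f p with hD
  have hle : ∀ s a, |Qstar s a - Qbstar (φ s) a| ≤ D := fun s a =>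
    le_ciSup hbdd (s, a)
  have hD0 : 0 ≤ D := le_trans (abs_nonneg _) (hle (Classical.arbitrary S) (Classical.arbitrary A))
  -- sup-difference bound on value functions
  have hM : ∀ s' : S, |(⨆ a', Qstar s' a') - ⨆ a', Qbstar (φ s') a'| ≤ D := by
    intro s'
    have b1 : BddAbove (Set.range fun a' => Qstar s' a') :=
      Set.Finite.bddAbove (Set.finite_range _)
    have b2 : BddAbove (Set.range fun a' => Qbstar (φ s') a') :=
      Set.Finite.bddAbove (Set.finite_range _)
    rw [abs_sub_le_iff]
    constructor
    · rw [sub_le_iff_le_add]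
      refine ciSup_le fun a' => ?_
      have := hle s' a'
      have h1 : Qstar s' a' ≤ Qbstar (φ s') a' + D := by
        have := abs_le.1 this; linarith [this.2]
      exact h1.trans (by linarith [le_ciSup b2 a'])
    · rw [sub_le_iff_le_add]
      refine ciSup_le fun a' => ?_
      have h1 : Qbstar (φ s') a' ≤ Qstar s' a' + D := by
        have := abs_le.1 (hle s' a'); linarith [this.1]
      exact h1.trans (by linarith [le_ciSup b1 a'])
  -- contraction: every error term is ≤ γ * D
  have key : ∀ s a, |Qstar s a - Qbstar (φ s) a| ≤ γ * D := by
    intro s a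
    have hsum : (∑ sb', Tb (φ s) a sb' * ⨆ a', Qbstar sb' a')
        = ∑ s', T s a s' * ⨆ a', Qbstar (φ s') a' := by
      rw [← Finset.sum_fiberwise univ φ (fun s' => T s a s' * ⨆ a', Qbstar (φ s') a')]
      refine Finset.sum_congr rfl fun sb _ => ?_
      rw [← hT s a sb, Finset.sum_mul]
      refine Finset.sum_congr rfl fun s' hs' => ?_
      rw [(Finset.mem_filter.1 hs').2]
    rw [hQstar, hQbstar, hR, hsum]
    have : R  s a = R s a := rfl
    rw [add_sub_add_left_eq_sub, ← mul_sub, ← Finset.sum_sub_distrib, abs_mul,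
      abs_of_nonneg hγ0]
    refine mul_le_mul_of_nonneg_left ?_ hγ0
    calc |∑ s', (T s a s' * (⨆ a', Qstar s' a') - T s a s' * ⨆ a', Qbstar (φ s') a')|
        ≤ ∑ s', |T s a s' * (⨆ a', Qstar s' a') - T s a s' * ⨆ a', Qbstar (φ s') a'| :=
          Finset.abs_sum_le_sum_abs _ _
      _ ≤ ∑ s', T s a s' * D := by
          refine Finset.sum_le_sum fun s' _ => ?_
          rw [← mul_sub, abs_mul, abs_of_nonneg (hT0 s a s')]
          exact mul_le_mul_of_nonneg_left (hM s') (hT0 s a s')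
      _ = D := by rw [← Finset.sum_mul, hT1, one_mul]
  -- hence D ≤ γ D, so D = 0
  have hDγ : D ≤ γ * D := ciSup_le fun p => key p.1 p.2
  have hDz : D = 0 := le_antisymm (by nlinarith) hD0
  have hmain : ∀ s a, Qstar s a = Qbstar (φ s) a := by
    intro s a
    have := (hle s a).trans_eq hDz
    have := abs_nonpos_iff.1 this
    linarith [sub_eq_zero.1 this]
  exact ⟨hmain, fun s₁ s₂ a h => by rw [hmain s₁ a, hmain s₂ a, h]⟩
end

section
/- Let M = (S, A, T, R, γ) and M̄ = (S̄, A, T̄, R̄, γ) be finite MDPs with the same action set and discount factor, and let φ : S → S̄ be an MDP bisimulation from M to M̄, i.e., a surjection satisfying R(s,a) = R̄(φ(s),a) and ∑_{s' : φ(s') = s̄} T(s,a,s') = T̄(φ(s),a,s̄) for all s ∈ S, a ∈ A, s̄ ∈ S̄. Let π̄ be a policy on M̄ whose value function Q̄_π̄ (the solution of the Bellman evaluation equation of π̄ in M̄) equals Q̄* (the solution of the Bellman optimality equation in M̄). Then the lifted policy π on M defined by π(s,a) := π̄(φ(s),a) is optimal in M: its value function Q_π equals the solution Q* of the Bellman optimality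 equation in M, and hence Q_π(s,a) ≥ Q_ρ(s,a) for every policy ρ on M and all s ∈ S, a ∈ A. -/
open Finset

/-- Weighted average bound. -/
lemma mdp_avg_le {ι : Type*} [Fintype ι] (w f : ι → ℝ) (hw0 : ∀ i, 0 ≤ w i)
    (hw1 : ∑ i, w i = 1) (c : ℝ) (hf : ∀ i, f i ≤ c) : ∑ i, w i * f i ≤ c := by
  calc ∑ i, w i * f i ≤ ∑ i, w i * c :=
        Finset.sum_le_sum (fun i _ => mul_le_mul_of_nonneg_left (hf i) (hw0 i))
    _ = c := by rw [← Finset.sum_mul, hw1, one_mul]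

/-- A one-sided contraction argument: if `D` is bounded by `γ` times its own sup,
with `0 ≤ γ < 1`, then `D ≤ 0`. -/
lemma mdp_contraction {S A : Type*} [Fintype S] [Fintype A] [Nonempty S] [Nonempty A]
    {γ : ℝ} (hγ0 : 0 ≤ γ) (hγ1 : γ < 1) (D : S → A → ℝ)
    (h : ∀ s a, D s a ≤ γ * (Finset.univ.sup' (Finset.univ_nonempty)
      (fun p : S × A => D p.1 p.2))) : ∀ s a, D s a ≤ 0 := by
  set M := Finset.univ.sup' (Finset.univ_nonempty) (fun p : S × A => D p.1 p.2) with hM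
  obtain ⟨p, -, hp⟩ := Finset.exists_mem_eq_sup' (Finset.univ_nonempty)
    (fun p : S × A => D p.1 p.2)
  have hMle : M ≤ γ * M := le_of_eq_of_le (hM.trans hp) (h p.1 p.2)
  have hM0 : M ≤ 0 := by nlinarith
  intro s a
  calc D s a ≤ γ * M := h s a
    _ ≤ 0 := mul_nonpos_of_nonneg_of_nonpos hγ0 hM0

/-- Regrouping a sum over fibers of `φ`. -/
lemma mdp_regroup {S Sb : Type*} [Fintype S] [Fintype Sb] [DecidableEq Sb]
    (φ : S → Sb) (w : S → ℝ) (f : Sb → ℝ) :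
    ∑ s', w s' * f (φ s')
      = ∑ sb, (∑ s' ∈ univ.filter (fun s' => φ s' = sb), w s') * f sb := by
  have := Finset.sum_fiberwise_eq_sum_filter (univ : Finset S) (univ : Finset Sb)
    φ (fun s' => w s' * f (φ s'))
  simp only [Finset.mem_univ, Finset.filter_true] at this
  rw [← this]
  refine Finset.sum_congr rfl fun sb _ => ?_
  rw [Finset.sum_mul]
  refine Finset.sum_congr rfl fun s' hs' => ?_
  rw [(Finset.mem_filter.mp hs').2]

/-- Uniqueness of the solution of the Bellman evaluation equation. -/
lemma mdp_eval_unique {S A : Type*} [Fintype S] [Fintype A] [Nonempty S] [Nonempty A]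
    (T : S → A → S → ℝ) (R : S → A → ℝ) (π : S → A → ℝ) {γ : ℝ}
    (hT0 : ∀ s a s', 0 ≤ T s a s') (hT1 : ∀ s a, ∑ s', T s a s' = 1)
    (hπ0 : ∀ s a, 0 ≤ π s a) (hπ1 : ∀ s, ∑ a, π s a = 1)
    (hγ0 : 0 ≤ γ) (hγ1 : γ < 1) (Q1 Q2 : S → A → ℝ)
    (h1 : ∀ s a, Q1 s a = R s a + γ * ∑ s', T s a s' * ∑ a', π s' a' * Q1 s' a')
    (h2 : ∀ s a, Q2 s a = R s a + γ * ∑ s', T s a s' * ∑ a', π s' a' * Q2 s' a') :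
    ∀ s a, Q1 s a = Q2 s a := by
  have key : ∀ (P Q : S → A → ℝ),
      (∀ s a, P s a = R s a + γ * ∑ s', T s a s' * ∑ a', π s' a' * P s' a') →
      (∀ s a, Q s a = R s a + γ * ∑ s', T s a s' * ∑ a', π s' a' * Q s' a') →
      ∀ s a, P s a - Q s a ≤ 0 := by
    intro P Q hP hQ
    apply mdp_contraction hγ0 hγ1
    intro s a
    set M := Finset.univ.sup' (Finset.univ_nonempty)
      (fun p : S × A => P p.1 p.2 - Q p.1 p.2) with hM
    have hDM : ∀ s' a', P s' a' - Q s' a' ≤ M := fun s' a' =>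
      Finset.le_sup' (fun p : S × A => P p.1 p.2 - Q p.1 p.2)
        (Finset.mem_univ (s', a'))
    have hz : ∑ s', T s a s' * ∑ a', π s' a' * (P s' a' - Q s' a')
        = (∑ s', T s a s' * ∑ a', π s' a' * P s' a')
          - ∑ s', T s a s' * ∑ a', π s' a' * Q s' a' := by
      rw [← Finset.sum_sub_distrib]
      refine Finset.sum_congr rfl fun s' _ => ?_
      rw [← mul_sub, ← Finset.sum_sub_distrib]
      congr 1
      exact Finset.sum_congr rfl fun a' _ => by ring
    have : P s a - Q s a = γ * ∑ s', T s a s' * ∑ a', π s' a' * (P s' a' - Q s' a') := by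
      rw [hP, hQ, hz]; ring
    rw [this]
    refine mul_le_mul_of_nonneg_left ?_ hγ0
    refine mdp_avg_le _ _ (hT0 s a) (hT1 s a) M fun s' => ?_
    exact mdp_avg_le _ _ (hπ0 s') (hπ1 s') M (hDM s')
  intro s a
  have := key Q1 Q2 h1 h2 s a
  have := key Q2 Q1 h2 h1 s a
  linarith

/-- Uniqueness of the solution of the Bellman optimality equation. -/
lemma mdp_opt_unique {S A : Type*} [Fintype S] [Fintype A] [Nonempty S] [Nonempty A]
    (T : S → A → S → ℝ) (R : S → A → ℝ) {γ : ℝ}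
    (hT0 : ∀ s a s', 0 ≤ T s a s') (hT1 : ∀ s a, ∑ s', T s a s' = 1)
    (hγ0 : 0 ≤ γ) (hγ1 : γ < 1) (Q1 Q2 : S → A → ℝ)
    (h1 : ∀ s a, Q1 s a = R s a + γ * ∑ s', T s a s' * ⨆ a', Q1 s' a')
    (h2 : ∀ s a, Q2 s a = R s a + γ * ∑ s', T s a s' * ⨆ a', Q2 s' a') :
    ∀ s a, Q1 s a = Q2 s a := by
  have key : ∀ (P Q : S → A → ℝ),
      (∀ s a, P s a = R s a + γ * ∑ s', T s a s' * ⨆ a', P s' a') →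
      (∀ s a, Q s a = R s a + γ * ∑ s', T s a s' * ⨆ a', Q s' a') →
      ∀ s a, P s a - Q s a ≤ 0 := by
    intro P Q hP hQ
    apply mdp_contraction hγ0 hγ1
    intro s a
    set M := Finset.univ.sup' (Finset.univ_nonempty)
      (fun p : S × A => P p.1 p.2 - Q p.1 p.2) with hM
    have hDM : ∀ s' a', P s' a' - Q s' a' ≤ M := fun s' a' =>
      Finset.le_sup' (fun p : S × A => P p.1 p.2 - Q p.1 p.2)
        (Finset.mem_univ (s', a'))
    have hsup : ∀ s', (⨆ a', P s' a') - (⨆ a', Q s' a') ≤ M := by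
      intro s'
      rw [sub_le_iff_le_add]
      refine ciSup_le fun a' => ?_
      have hb : Q s' a' ≤ ⨆ a'', Q s' a'' :=
        le_ciSup (Set.Finite.bddAbove (Set.finite_range _)) a'
      have := hDM s' a'
      linarith
    have hz : ∑ s', T s a s' * ((⨆ a', P s' a') - ⨆ a', Q s' a')
        = (∑ s', T s a s' * ⨆ a', P s' a') - ∑ s', T s a s' * ⨆ a', Q s' a' := by
      rw [← Finset.sum_sub_distrib]
      exact Finset.sum_congr rfl fun s' _ => by ring
    have heq : P s a - Q s a
        = γ * ∑ s', T s a s' * ((⨆ a', P s' a') - ⨆ a', Q s' a') := by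
      rw [hP, hQ, hz]; ring
    rw [heq]
    refine mul_le_mul_of_nonneg_left ?_ hγ0
    exact mdp_avg_le _ _ (hT0 s a) (hT1 s a) M hsup
  intro s a
  have := key Q1 Q2 h1 h2 s a
  have := key Q2 Q1 h2 h1 s a
  linarith

open Finset in
/-- A policy that is optimal in the abstract MDP, lifted through a
bisimulation `φ`, is optimal in the ground MDP. -/
theorem lifted_optimal_policy_is_optimal
    {S A Sb : Type*} [Fintype S] [Fintype A] [Fintype Sb]
    [Nonempty S] [Nonempty A] [Nonempty Sb] [DecidableEq Sb]
    (T : S → A → S → ℝ) (R : S → A → ℝ)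
    (Tb : Sb → A → Sb → ℝ) (Rb : Sb → A → ℝ) (γ : ℝ)
    (hT0 : ∀ s a s', 0 ≤ T s a s') (hT1 : ∀ s a, ∑ s', T s a s' = 1)
    (hTb0 : ∀ sb a sb', 0 ≤ Tb sb a sb') (hTb1 : ∀ sb a, ∑ sb', Tb sb a sb' = 1)
    (hγ0 : 0 ≤ γ) (hγ1 : γ < 1)
    (φ : S → Sb) (hφ : Function.Surjective φ)
    (hR : ∀ s a, R s a = Rb (φ s) a)
    (hT : ∀ s a (sb : Sb),
      (∑ s' ∈ univ.filter (fun s' => φ s' = sb), T s a s') = Tb (φ s) a sb)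
    -- an abstract policy `πb` whose value function `Qbπb` is optimal in the abstract MDP
    (πb : Sb → A → ℝ) (hπb0 : ∀ sb a, 0 ≤ πb sb a) (hπb1 : ∀ sb, ∑ a, πb sb a = 1)
    (Qbπb : Sb → A → ℝ)
    (hQbπb : ∀ sb a, Qbπb sb a = Rb sb a + γ * ∑ sb', Tb sb a sb' * ∑ a', πb sb' a' * Qbπb sb' a')
    (Qbstar : Sb → A → ℝ)
    (hQbstar : ∀ sb a, Qbstar sb a = Rb sb a + γ * ∑ sb', Tb sb a sb' * ⨆ a', Qbstar sb' a')
    (hopt : ∀ sb a, Qbπb sb a = Qbstar sb a)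
    -- the lifted policy `π` and its value function `Qπ` in the ground MDP
    (π : S → A → ℝ) (hπ : ∀ s a, π s a = πb (φ s) a)
    (Qπ : S → A → ℝ)
    (hQπ : ∀ s a, Qπ s a = R s a + γ * ∑ s', T s a s' * ∑ a', π s' a' * Qπ s' a')
    -- the optimal value function of the ground MDP
    (Qstar : S → A → ℝ)
    (hQstar : ∀ s a, Qstar s a = R s a + γ * ∑ s', T s a s' * ⨆ a', Qstar s' a') :
    (∀ s a, Qπ s a = Qstar s a) ∧
    (∀ (ρ : S → A → ℝ), (∀ s a, 0 ≤ ρ s a) → (∀ s, ∑ a, ρ s a = 1) →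
      ∀ (Qρ : S → A → ℝ),
        (∀ s a, Qρ s a = R s a + γ * ∑ s', T s a s' * ∑ a', ρ s' a' * Qρ s' a') →
        ∀ s a, Qρ s a ≤ Qπ s a) := by
  have hπ0 : ∀ s a, 0 ≤ π s a := fun s a => (hπ s a) ▸ hπb0 (φ s) a
  have hπ1 : ∀ s, ∑ a, π s a = 1 := by
    intro s
    simp only [hπ]
    exact hπb1 (φ s)
  -- the lifted Qbπb satisfies the ground evaluation equation for π
  have hlift_eval : ∀ s a, (fun s a => Qbπb (φ s) a) s a
      = R s a + γ * ∑ s', T s a s' * ∑ a', π s' a' *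
        (fun s a => Qbπb (φ s) a) s' a' := by
    intro s a
    simp only
    rw [hQbπb (φ s) a, hR s a]
    congr 1
    congr 1
    have := mdp_regroup φ (T s a) (fun sb => ∑ a', πb sb a' * Qbπb sb a')
    simp only [hT s a] at this
    rw [← this]
    refine Finset.sum_congr rfl fun s' _ => ?_
    congr 1
    refine Finset.sum_congr rfl fun a' _ => ?_
    rw [hπ]
  -- the lifted Qbstar satisfies the ground optimality equation
  have hlift_opt : ∀ s a, (fun s a => Qbstar (φ s) a) s a
      = R s a + γ * ∑ s', T s a s' * ⨆ a', (fun s a => Qbstar (φ s) a) s' a' := by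
    intro s a
    simp only
    rw [hQbstar (φ s) a, hR s a]
    congr 1
    congr 1
    have := mdp_regroup φ (T s a) (fun sb => ⨆ a', Qbstar sb a')
    simp only [hT s a] at this
    rw [← this]
  have h1 : ∀ s a, Qπ s a = Qbπb (φ s) a :=
    mdp_eval_unique T R π hT0 hT1 hπ0 hπ1 hγ0 hγ1 Qπ (fun s a => Qbπb (φ s) a) hQπ hlift_eval
  have h2 : ∀ s a, Qstar s a = Qbstar (φ s) a :=
    mdp_opt_unique T R hT0 hT1 hγ0 hγ1 Qstar (fun s a => Qbstar (φ s) a) hQstar hlift_opt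
  have hmain : ∀ s a, Qπ s a = Qstar s a := by
    intro s a
    rw [h1, h2, hopt]
  refine ⟨hmain, ?_⟩
  intro ρ hρ0 hρ1 Qρ hQρ s a
  -- show Qρ ≤ Qstar via contraction
  have key : ∀ s a, Qρ s a - Qstar s a ≤ 0 := by
    apply mdp_contraction hγ0 hγ1
    intro s a
    set M := Finset.univ.sup' (Finset.univ_nonempty)
      (fun p : S × A => Qρ p.1 p.2 - Qstar p.1 p.2) with hM
    have hDM : ∀ s' a', Qρ s' a' - Qstar s' a' ≤ M := fun s' a' =>
      Finset.le_sup' (fun p : S × A => Qρ p.1 p.2 - Qstar p.1 p.2)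
        (Finset.mem_univ (s', a'))
    have hz : ∑ s', T s a s' * ((∑ a', ρ s' a' * Qρ s' a') - ⨆ a', Qstar s' a')
        = (∑ s', T s a s' * ∑ a', ρ s' a' * Qρ s' a')
          - ∑ s', T s a s' * ⨆ a', Qstar s' a' := by
      rw [← Finset.sum_sub_distrib]
      exact Finset.sum_congr rfl fun s' _ => by ring
    have heq : Qρ s a - Qstar s a
        = γ * ∑ s', T s a s' * ((∑ a', ρ s' a' * Qρ s' a') - ⨆ a', Qstar s' a') := by
      rw [hQρ, hQstar, hz]; ring
    rw [heq]
    refine mul_le_mul_of_nonneg_left ?_ hγ0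
    refine mdp_avg_le _ _ (hT0 s a) (hT1 s a) M fun s' => ?_
    rw [sub_le_iff_le_add]
    have hle : ∀ a', Qρ s' a' ≤ M + ⨆ a'', Qstar s' a'' := by
      intro a'
      have hb : Qstar s' a' ≤ ⨆ a'', Qstar s' a'' :=
        le_ciSup (Set.Finite.bddAbove (Set.finite_range _)) a'
      have := hDM s' a'
      linarith
    exact mdp_avg_le _ _ (hρ0 s') (hρ1 s') _ hle
  have := key s a
  have := hmain s a
  linarith
end

section
/- (Core of Theorem 1, bisimulation direction.) Let M = (S, A, T, R, γ) be a deterministic finite MDP with successor function δ : S × A → S, and let Q* : S × A → ℝ satisfy the Bellman optimality equation Q*(s,a) = R(s,a) + γ · max_{a'} Q*(δ(s,a),a'). Let φ : S → S̄ be a surjection onto a finite set S̄ such that there exist functions f_a : S̄ → S̄ for each a ∈ A with f_a(φ(s)) = φ(δ(s,a)) for all s ∈ S, a ∈ A, and a function q : S̄ × A → ℝ with q(φ(s),a) = Q*(s,a) for all s ∈ S, a ∈ A. Then φ satisfies the bisimulation conditions: for all s₁, s₂ ∈ S, a ∈ A, and s̄ ∈ S̄, φ(s₁) = φ(s₂)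 implies R(s₁,a) = R(s₂,a) and ∑_{s' : φ(s') = s̄} T(s₁,a,s') = ∑_{s' : φ(s') = s̄} T(s₂,a,s'). -/
open Finset in
/-- Core of Theorem 1, bisimulation direction: if the abstraction `φ` admits
abstract (deterministic) transition tables `f` and a tabular decoder `q` of
the optimal state-action values, then `φ` satisfies the bisimulation
conditions. -/
theorem abstract_tables_imply_bisimulation
    {S A Sb : Type*} [Fintype S] [Fintype A] [Fintype Sb]
    [Nonempty S] [Nonempty A] [Nonempty Sb] [DecidableEq S] [DecidableEq Sb]
    (T : S → A → S → ℝ) (R : S → A → ℝ) (γ : ℝ)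
    (hγ0 : 0 ≤ γ) (hγ1 : γ < 1)
    (δ : S → A → S)
    (hdet : ∀ s a s', T s a s' = if s' = δ s a then 1 else 0)
    (Qstar : S → A → ℝ)
    (hQstar : ∀ s a, Qstar s a = R s a + γ * ⨆ a', Qstar (δ s a) a')
    (φ : S → Sb) (hφ : Function.Surjective φ)
    (f : A → Sb → Sb) (hf : ∀ s a, f a (φ s) = φ (δ s a))
    (q : Sb → A → ℝ) (hq : ∀ s a, q (φ s) a = Qstar s a) :
    ∀ s₁ s₂ a (sb : Sb), φ s₁ = φ s₂ →
      R s₁ a = R s₂ a ∧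
      (∑ s' ∈ univ.filter (fun s' => φ s' = sb), T s₁ a s') =
      (∑ s' ∈ univ.filter (fun s' => φ s' = sb), T s₂ a s') := by
  intro s₁ s₂ a sb h
  have hδ : φ (δ s₁ a) = φ (δ s₂ a) := by rw [← hf, ← hf, h]
  have hQ : ∀ a', Qstar (δ s₁ a) a' = Qstar (δ s₂ a) a' := by
    intro a'; rw [← hq, ← hq, hδ]
  have hQsa : Qstar s₁ a = Qstar s₂ a := by rw [← hq, ← hq, h]
  constructor
  · have h1 := hQstar s₁ a
    have h2 := hQstar s₂ a
    have hsup : (⨆ a', Qstar (δ s₁ a) a') = ⨆ a', Qstar (δ s₂ a) a' := by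
      exact congrArg _ (funext hQ)
    rw [h1, h2, hsup] at hQsa
    linarith
  · have key : ∀ s, (∑ s' ∈ univ.filter (fun s' => φ s' = sb), T s a s')
        = if φ (δ s a) = sb then 1 else 0 := by
      intro s
      simp only [hdet]
      rw [Finset.sum_ite_eq' (filter (fun s' => φ s' = sb) univ) (δ s a) (fun _ => (1:ℝ))]
      simp [Finset.mem_filter]
    rw [key, key, hδ]
end

section
/- (Core of Theorem 1, existence direction.) Let M = (S, A, T, R, γ) be a deterministic finite MDP with successor function δ : S × A → S, let Q* : S × A → ℝ satisfy the Bellman optimality equation Q*(s,a) = R(s,a) + γ · max_{a'} Q*(δ(s,a),a'), and let φ : S → S̄ be a surjection onto a finite set S̄ satisfying the bisimulation conditions: for all s₁, s₂ ∈ S, a ∈ A, s̄ ∈ S̄, φ(s₁) = φ(s₂) implies R(s₁,a) = R(s₂,a) and ∑_{s' : φ(s') = s̄} T(s₁,a,s') = ∑_{s' : φ(s') = s̄} T(s₂,a,s'). Then there exist functions f_a : S̄ → S̄ for each a ∈ A and a function q : S̄ × A → ℝ such that f_a(φ(s)) = φ(δ(s,a)) and q(φ(s),a) = Q*(s,a)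 for all s ∈ S and a ∈ A. -/
open Finset in
/-- |sup' f - sup' g| ≤ sup' |f - g| for nonempty finsets. -/
lemma abs_sup'_sub_sup'_le_aux {ι : Type*} (s : Finset ι) (hs : s.Nonempty)
    (f g : ι → ℝ) :
    |s.sup' hs f - s.sup' hs g| ≤ s.sup' hs (fun i => |f i - g i|) := by
  rw [abs_sub_le_iff]
  constructor
  · rw [sub_le_iff_le_add]
    refine Finset.sup'_le _ _ fun i hi => ?_
    have h1 := Finset.le_sup' g hi
    have h2 := le_trans (le_abs_self (f i - g i))
      (Finset.le_sup' (fun i => |f i - g i|) hi)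
    linarith
  · rw [sub_le_iff_le_add]
    refine Finset.sup'_le _ _ fun i hi => ?_
    have h1 := Finset.le_sup' f hi
    have h2 := le_trans (neg_abs_le (f i - g i))
      (le_trans (le_refl _) (le_abs_self (f i - g i)))
    have h3 := le_trans (neg_le_abs (f i - g i) |>.trans (le_refl _))
      (Finset.le_sup' (fun i => |f i - g i|) hi)
    linarith [neg_abs_le (f i - g i)]

open Finset in
/-- Core of Theorem 1, existence direction: a bisimulation `φ` of a
deterministic finite MDP admits deterministic abstract transition tables `f`
and a tabular decoder `q` of the optimal state-action values. -/
theorem bisimulation_admits_abstract_tables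
    {S A Sb : Type*} [Fintype S] [Fintype A] [Fintype Sb]
    [Nonempty S] [Nonempty A] [Nonempty Sb] [DecidableEq S] [DecidableEq Sb]
    (T : S → A → S → ℝ) (R : S → A → ℝ) (γ : ℝ)
    (hγ0 : 0 ≤ γ) (hγ1 : γ < 1)
    (δ : S → A → S)
    (hdet : ∀ s a s', T s a s' = if s' = δ s a then 1 else 0)
    (Qstar : S → A → ℝ)
    (hQstar : ∀ s a, Qstar s a = R s a + γ * ⨆ a', Qstar (δ s a) a')
    (φ : S → Sb) (hφ : Function.Surjective φ)
    (hR : ∀ s₁ s₂ a, φ s₁ = φ s₂ → R s₁ a = R s₂ a)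
    (hT : ∀ s₁ s₂ a (sb : Sb), φ s₁ = φ s₂ →
      (∑ s' ∈ univ.filter (fun s' => φ s' = sb), T s₁ a s') =
      (∑ s' ∈ univ.filter (fun s' => φ s' = sb), T s₂ a s')) :
    ∃ (f : A → Sb → Sb) (q : Sb → A → ℝ),
      (∀ s a, f a (φ s) = φ (δ s a)) ∧ (∀ s a, q (φ s) a = Qstar s a) := by
  classical
  -- Step 1: φ respects successors.
  have hsum : ∀ s a (sb : Sb),
      (∑ s' ∈ univ.filter (fun s' => φ s' = sb), T s a s')
        = if φ (δ s a) = sb then 1 else 0 := by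
    intro s a sb
    simp only [hdet]
    rw [Finset.sum_ite_eq' (univ.filter (fun s' => φ s' = sb)) (δ s a) (fun _ => (1 : ℝ))]
    simp [Finset.mem_filter]
  have hδφ : ∀ s₁ s₂ a, φ s₁ = φ s₂ → φ (δ s₁ a) = φ (δ s₂ a) := by
    intro s₁ s₂ a h
    have := hT s₁ s₂ a (φ (δ s₁ a)) h
    rw [hsum, hsum, if_pos rfl] at this
    by_contra hne
    rw [if_neg (fun hh => hne hh.symm)] at this
    norm_num at this
  -- Step 2: Qstar respects φ (contraction argument).
  have hQφ : ∀ s₁ s₂ a, φ s₁ = φ s₂ → Qstar s₁ a = Qstar s₂ a := by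
    -- consider the finset of pairs with equal image
    set P : Finset (S × S × A) :=
      univ.filter (fun p => φ p.1 = φ p.2.1) with hP
    have hPne : P.Nonempty := by
      obtain ⟨s⟩ := (inferInstance : Nonempty S)
      obtain ⟨a⟩ := (inferInstance : Nonempty A)
      exact ⟨(s, s, a), by simp [hP]⟩
    set D : ℝ := P.sup' hPne (fun p => |Qstar p.1 p.2.2 - Qstar p.2.1 p.2.2|) with hD
    have hD0 : 0 ≤ D := by
      obtain ⟨p, hp⟩ := hPne
      exact le_trans (abs_nonneg _)
        (Finset.le_sup' (fun p : S × S × A => |Qstar p.1 p.2.2 - Qstar p.2.1 p.2.2|) hp)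
    have hstep : D ≤ γ * D := by
      refine Finset.sup'_le _ _ fun p hp => ?_
      obtain ⟨s₁, s₂, a⟩ := p
      have hpm : φ s₁ = φ s₂ := by simpa [hP] using hp
      have h1 : Qstar s₁ a - Qstar s₂ a
          = γ * ((⨆ a', Qstar (δ s₁ a) a') - ⨆ a', Qstar (δ s₂ a) a') := by
        rw [hQstar s₁ a, hQstar s₂ a, hR s₁ s₂ a hpm]; ring
      rw [h1, abs_mul, abs_of_nonneg hγ0]
      refine mul_le_mul_of_nonneg_left ?_ hγ0
      rw [← Finset.sup'_univ_eq_ciSup (fun a' => Qstar (δ s₁ a) a'),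
          ← Finset.sup'_univ_eq_ciSup (fun a' => Qstar (δ s₂ a) a')]
      refine le_trans (abs_sup'_sub_sup'_le_aux _ _ _ _) ?_
      refine Finset.sup'_le _ _ fun a' _ => ?_
      have hmem : (δ s₁ a, δ s₂ a, a') ∈ P := by
        simp [hP, hδφ s₁ s₂ a hpm]
      exact Finset.le_sup' (fun p => |Qstar p.1 p.2.2 - Qstar p.2.1 p.2.2|) hmem
    have hDle0 : D ≤ 0 := by nlinarith
    have hDeq : D = 0 := le_antisymm hDle0 hD0
    intro s₁ s₂ a h
    have hmem : (s₁, s₂, a) ∈ P := by simp [hP, h]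
    have := Finset.le_sup' (fun p : S × S × A =>
      |Qstar p.1 p.2.2 - Qstar p.2.1 p.2.2|) hmem
    rw [← hD, hDeq] at this
    have : |Qstar s₁ a - Qstar s₂ a| = 0 := le_antisymm this (abs_nonneg _)
    linarith [abs_eq_zero.mp this]
  -- Step 3: define f and q via a section of φ.
  refine ⟨fun a sb => φ (δ (Function.surjInv hφ sb) a),
    fun sb a => Qstar (Function.surjInv hφ sb) a, fun s a => ?_, fun s a => ?_⟩
  · exact hδφ _ _ a (Function.surjInv_eq hφ (φ s))
  · exact hQφ _ _ a (Function.surjInv_eq hφ (φ s))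
end
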